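/- arXiv:2004.13779 — 2 statements merged into one kernel-verified Lean document; each statement's English description precedes it below -/
import Mathlib

section
/- Let φ(t) = -((k+d)/2)·log(1 + t/k) for t ≥ 0, where k > 0 and d ≥ 1 (the log-density generator of the multivariate t-distribution). Then φ'(t) < 0 for all t ≥ 0, and t·φ''(t)/φ'(t) = -t/(k+t). Consequently there is no ρ ∈ [0,1) such that -ρ/(1+ρ) ≤ -t/(k+t) ≤ ρ/(1-ρ) holds for all t ≥ 0. -/
open Real

section LogOneAddDiv

variable {k t : ℝ}

theorem hasDerivAt_log_one_add_div (hk : k ≠ 0) (ht : k + t ≠ 0) :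
    HasDerivAt (fun s => log (1 + s / k)) (k + t)⁻¹ t := by
  have hpos : 1 + t / k ≠ 0 := by
    rw [one_add_div hk]
    exact div_ne_zero ht hk
  have h := (((hasDerivAt_id' t).div_const k).const_add 1).log hpos
  convert h using 1
  field_simp

theorem deriv_const_mul_log_one_add_div (a : ℝ) (hk : k ≠ 0) (ht : k + t ≠ 0) :
    deriv (fun s => a * log (1 + s / k)) t = a / (k + t) :=
  ((hasDerivAt_log_one_add_div hk ht).const_mul a).deriv

theorem deriv_deriv_const_mul_log_one_add_div (a : ℝ) (hk : k ≠ 0) (ht : k + t ≠ 0) :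
    deriv (deriv fun s => a * log (1 + s / k)) t = -a / (k + t) ^ 2 := by
  have hderiv : (deriv fun s => a * log (1 + s / k)) =ᶠ[nhds t] fun s => a / (k + s) := by
    filter_upwards [(isOpen_ne_fun (by fun_prop) continuous_const).mem_nhds ht] with s hs
    exact deriv_const_mul_log_one_add_div a hk hs
  rw [hderiv.deriv_eq, deriv_const_div a (by fun_prop) ht, deriv_const_add, deriv_id'', mul_one]

end LogOneAddDiv

theorem half_le_div_one_add_iff {ρ : ℝ} (hρ : -1 < ρ) : 1 / 2 ≤ ρ / (1 + ρ) ↔ 1 ≤ ρ := by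
  rw [div_le_div_iff₀ two_pos (by linarith)]
  constructor <;> intro h <;> linarith

theorem stmt_6_general (k : ℝ) (hk : 0 < k) (d : ℕ)
    (φ : ℝ → ℝ) (hφ : ∀ t, φ t = -((k + d) / 2) * Real.log (1 + t / k)) :
    (∀ t : ℝ, 0 ≤ t → deriv φ t < 0) ∧
    (∀ t : ℝ, 0 ≤ t → t * deriv (deriv φ) t / deriv φ t = -t / (k + t)) ∧
    ¬ ∃ ρ : ℝ, 0 ≤ ρ ∧ ρ < 1 ∧
      ∀ t : ℝ, 0 ≤ t → (-ρ / (1 + ρ) ≤ -t / (k + t) ∧ -t / (k + t) ≤ ρ / (1 - ρ)) := by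
  obtain rfl : φ = fun t => -((k + d) / 2) * log (1 + t / k) := funext hφ
  have hkt {t : ℝ} (ht : 0 ≤ t) : k + t ≠ 0 := by positivity
  refine ⟨fun t ht => ?_, fun t ht => ?_, ?_⟩
  · rw [deriv_const_mul_log_one_add_div _ hk.ne' (hkt ht), neg_div]
    exact neg_neg_of_pos (by positivity)
  · rw [deriv_const_mul_log_one_add_div _ hk.ne' (hkt ht),
      deriv_deriv_const_mul_log_one_add_div _ hk.ne' (hkt ht)]
    field_simp
  · rintro ⟨ρ, hρ0, hρ1, h⟩
    -- the ratio t/(k+t) reaches 1/2 at t = k, while ρ/(1+ρ) < 1/2 for ρ < 1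
    have hhalf : -k / (k + k) = -(1 / 2) := by field_simp; ring
    have := (h k hk.le).1
    rw [hhalf, neg_div, neg_le_neg_iff, half_le_div_one_add_iff (by linarith)] at this
    linarith

/-- For the log-density generator of the multivariate t-distribution,
`φ(t) = -((k+d)/2)·log(1+t/k)`: `φ' < 0` on `[0,∞)`, `t·φ''(t)/φ'(t) = -t/(k+t)`,
and no `ρ ∈ [0,1)` satisfies `-ρ/(1+ρ) ≤ -t/(k+t) ≤ ρ/(1-ρ)` for all `t ≥ 0`. -/
theorem stmt_6 (k : ℝ) (hk : 0 < k) (d : ℕ) (hd : 1 ≤ d)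
    (φ : ℝ → ℝ) (hφ : ∀ t, φ t = -((k + d) / 2) * Real.log (1 + t / k)) :
    (∀ t : ℝ, 0 ≤ t → deriv φ t < 0) ∧
    (∀ t : ℝ, 0 ≤ t → t * deriv (deriv φ) t / deriv φ t = -t / (k + t)) ∧
    ¬ ∃ ρ : ℝ, 0 ≤ ρ ∧ ρ < 1 ∧
      ∀ t : ℝ, 0 ≤ t → (-ρ / (1 + ρ) ≤ -t / (k + t) ∧ -t / (k + t) ≤ ρ / (1 - ρ)) :=
  stmt_6_general k hk d φ hφ
end

section
/- Let τ be a positive random variable with E(1/τ²) < ∞ and Var(1/τ) < ∞, and let (Z_i, Z_j) be a bivariate centered Gaussian vector with unit variances and correlation ρ, independent of τ. Set X_i = Z_i/√τ and X_j = Z_j/√τ. Then corr(X_i², X_j²) = λ + (1-λ)ρ², where λ = Var(1/τ)/(Var(1/τ) + 2E(1/τ²)). In particular λ ∈ [0,1], and λ = 0 if and only if 1/τ is almost surely constant (the Gaussian case). -/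
/-!
Since `X = Z / √τ` with `Z ⫫ τ`, every even moment factors:
`E[X_i^(2p) X_j^(2q)] = E[Z_i^(2p) Z_j^(2q)] · E[τ^-(p+q)]`. With `m₁ = E(1/τ)`, `m₂ = E(1/τ²)`
and `v = m₂ - m₁² = Var(1/τ)`, the Gaussian moments give `Cov(X_i², X_j²) = (1 + 2ρ²)m₂ - m₁² =
v + 2ρ²m₂` and `Var(X_i²) = 3m₂ - m₁² = v + 2m₂`, whose ratio is the convex combination
`λ + (1 - λ)ρ²` with `λ = v / (v + 2m₂)`.
-/

open MeasureTheory ProbabilityTheory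

lemma div_sqrt_pow_two_mul (z t : ℝ) (ht : 0 ≤ t) (p : ℕ) :
    (z / √t) ^ (2 * p) = z ^ (2 * p) * (1 / t) ^ p := by
  rw [pow_mul, div_pow, Real.sq_sqrt ht, div_pow, pow_mul, one_div_pow, div_eq_mul_inv,
    inv_eq_one_div]

lemma div_add_two_mul_eq_add_one_sub_mul (v m ρ : ℝ) (h : v + 2 * m ≠ 0) :
    (v + 2 * m * ρ ^ 2) / (v + 2 * m) = v / (v + 2 * m) + (1 - v / (v + 2 * m)) * ρ ^ 2 := by
  field_simp
  ring

section

variable {Ω : Type*} [MeasurableSpace Ω] {μ : Measure Ω}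

lemma ProbabilityTheory.variance_eq_zero_iff_ae_eq_integral [IsFiniteMeasure μ] {X : Ω → ℝ}
    (hX : MemLp X 2 μ) :
    Var[X; μ] = 0 ↔ X =ᵐ[μ] fun _ => μ[X] := by
  rw [variance, ENNReal.toReal_eq_zero_iff, or_iff_left (evariance_lt_top hX).ne,
    evariance_eq_zero_iff hX.aemeasurable]

lemma MeasureTheory.integral_pos_of_ae_pos [NeZero μ] {f : Ω → ℝ} (hf : Integrable f μ)
    (hpos : ∀ᵐ ω ∂μ, 0 < f ω) : 0 < ∫ ω, f ω ∂μ := by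
  rw [integral_pos_iff_support_of_nonneg_ae (hpos.mono fun _ h => h.le) hf, pos_iff_ne_zero, Ne,
    Measure.measure_support_eq_zero_iff μ]
  intro hzero
  obtain ⟨ω, hω0, hωpos⟩ := (hzero.and hpos).exists
  exact hωpos.ne' hω0

variable {τ Zi Zj : Ω → ℝ}

lemma integral_div_sqrt_pow_mul_pow (hτ : AEMeasurable τ μ)
    (hZ : AEMeasurable (fun ω => (Zi ω, Zj ω)) μ) (hτpos : ∀ᵐ ω ∂μ, 0 < τ ω)
    (hindep : IndepFun (fun ω => (Zi ω, Zj ω)) τ μ) (p q : ℕ) :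
    ∫ ω, (Zi ω / √(τ ω)) ^ (2 * p) * (Zj ω / √(τ ω)) ^ (2 * q) ∂μ
      = (∫ ω, Zi ω ^ (2 * p) * Zj ω ^ (2 * q) ∂μ) * ∫ ω, (1 / τ ω) ^ (p + q) ∂μ := by
  have hmix : (fun ω => (Zi ω / √(τ ω)) ^ (2 * p) * (Zj ω / √(τ ω)) ^ (2 * q))
      =ᵐ[μ] fun ω => Zi ω ^ (2 * p) * Zj ω ^ (2 * q) * (1 / τ ω) ^ (p + q) := by
    filter_upwards [hτpos] with ω hω
    rw [div_sqrt_pow_two_mul _ _ hω.le, div_sqrt_pow_two_mul _ _ hω.le]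
    ring
  rw [integral_congr_ae hmix]
  exact hindep.integral_fun_comp_mul_comp (f := fun z => z.1 ^ (2 * p) * z.2 ^ (2 * q))
    (g := fun t => (1 / t) ^ (p + q)) hZ hτ (by fun_prop) (by fun_prop)

end

theorem stmt_16_general {Ω : Type*} [MeasurableSpace Ω] (μ : Measure Ω)
    [IsProbabilityMeasure μ]
    (τ Zi Zj : Ω → ℝ) (hτ : Measurable τ) (hZi : Measurable Zi)
    (hZj : Measurable Zj) (ρ : ℝ)
    (hτpos : ∀ᵐ ω ∂μ, 0 < τ ω)
    (hindep : ProbabilityTheory.IndepFun (fun ω => (Zi ω, Zj ω)) τ μ)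
    -- moments of the centered bivariate Gaussian (Z_i, Z_j):
    (hZi2 : ∫ ω, (Zi ω) ^ 2 ∂μ = 1) (hZj2 : ∫ ω, (Zj ω) ^ 2 ∂μ = 1)
    (hIsserlis : ∫ ω, (Zi ω) ^ 2 * (Zj ω) ^ 2 ∂μ = 1 + 2 * ρ ^ 2)
    (hZi4 : ∫ ω, (Zi ω) ^ 4 ∂μ = 3) (hZj4 : ∫ ω, (Zj ω) ^ 4 ∂μ = 3)
    -- integrability assumptions:
    (hτ2 : MemLp (fun ω => 1 / τ ω) 2 μ)
    (Xi Xj : Ω → ℝ)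
    (hXi : ∀ ω, Xi ω = Zi ω / Real.sqrt (τ ω))
    (hXj : ∀ ω, Xj ω = Zj ω / Real.sqrt (τ ω))
    (lam : ℝ)
    (hlam : lam = (∫ ω, (1 / τ ω) ^ 2 ∂μ - (∫ ω, 1 / τ ω ∂μ) ^ 2) /
      ((∫ ω, (1 / τ ω) ^ 2 ∂μ - (∫ ω, 1 / τ ω ∂μ) ^ 2)
        + 2 * ∫ ω, (1 / τ ω) ^ 2 ∂μ)) :
    ((∫ ω, (Xi ω) ^ 2 * (Xj ω) ^ 2 ∂μ
        - (∫ ω, (Xi ω) ^ 2 ∂μ) * (∫ ω, (Xj ω) ^ 2 ∂μ)) /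
      (Real.sqrt (∫ ω, (Xi ω) ^ 4 ∂μ - (∫ ω, (Xi ω) ^ 2 ∂μ) ^ 2) *
       Real.sqrt (∫ ω, (Xj ω) ^ 4 ∂μ - (∫ ω, (Xj ω) ^ 2 ∂μ) ^ 2))
      = lam + (1 - lam) * ρ ^ 2) ∧
    0 ≤ lam ∧ lam ≤ 1 ∧
    (lam = 0 ↔ (fun ω => 1 / τ ω) =ᵐ[μ] fun _ => ∫ ω, 1 / τ ω ∂μ) := by
  obtain rfl : Xi = _ := funext hXi
  obtain rfl : Xj = _ := funext hXj
  have hmoment := integral_div_sqrt_pow_mul_pow hτ.aemeasurable (hZi.prodMk hZj).aemeasurable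
    hτpos hindep
  have h10 := hmoment 1 0
  have h01 := hmoment 0 1
  have h11 := hmoment 1 1
  have h20 := hmoment 2 0
  have h02 := hmoment 0 2
  simp only [mul_one, mul_zero, pow_zero, one_mul, add_zero, zero_add, pow_one, Nat.reduceMul,
    Nat.reduceAdd] at h10 h01 h11 h20 h02
  rw [hZi2, one_mul] at h10
  rw [hZj2, one_mul] at h01
  rw [h11, h10, h01, h20, h02, hIsserlis, hZi4, hZj4]
  set m1 := ∫ ω, 1 / τ ω ∂μ
  set m2 := ∫ ω, (1 / τ ω) ^ 2 ∂μ
  have hvar : Var[fun ω => 1 / τ ω; μ] = m2 - m1 ^ 2 := variance_eq_sub hτ2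
  have hm2 : 0 < m2 := integral_pos_of_ae_pos hτ2.integrable_sq (by
    filter_upwards [hτpos] with ω hω
    positivity)
  have hv : 0 ≤ m2 - m1 ^ 2 := hvar ▸ variance_nonneg _ _
  have hD : 0 < (m2 - m1 ^ 2) + 2 * m2 := by linarith
  subst hlam
  refine ⟨?_, div_nonneg hv hD.le, div_le_one_of_le₀ (by linarith) hD.le, ?_⟩
  · have hsq : 3 * m2 - m1 ^ 2 = (m2 - m1 ^ 2) + 2 * m2 := by ring
    rw [hsq, Real.mul_self_sqrt hD.le, ← div_add_two_mul_eq_add_one_sub_mul _ _ _ hD.ne']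
    congr 1
    ring
  · rw [div_eq_zero_iff, or_iff_left hD.ne', ← hvar, variance_eq_zero_iff_ae_eq_integral hτ2]

/-- Scale mixture of normals: if `X_i = Z_i/√τ`, `X_j = Z_j/√τ` where `(Z_i,Z_j)`
is a centered bivariate Gaussian with unit variances and correlation `ρ`
(encoded through its moments, including Isserlis' `E(Z_i²Z_j²) = 1+2ρ²`),
independent of `τ > 0`, then `corr(X_i², X_j²) = λ + (1-λ)ρ²` with
`λ = Var(1/τ)/(Var(1/τ) + 2E(1/τ²)) ∈ [0,1]`, and `λ = 0` iff `1/τ` is a.s.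
constant. -/
theorem stmt_16 {Ω : Type*} [MeasurableSpace Ω] (μ : Measure Ω)
    [IsProbabilityMeasure μ]
    (τ Zi Zj : Ω → ℝ) (hτ : Measurable τ) (hZi : Measurable Zi)
    (hZj : Measurable Zj) (ρ : ℝ)
    (hτpos : ∀ᵐ ω ∂μ, 0 < τ ω)
    (hindep : ProbabilityTheory.IndepFun (fun ω => (Zi ω, Zj ω)) τ μ)
    -- moments of the centered bivariate Gaussian (Z_i, Z_j):
    (hZi0 : ∫ ω, Zi ω ∂μ = 0) (hZj0 : ∫ ω, Zj ω ∂μ = 0)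
    (hZi2 : ∫ ω, (Zi ω) ^ 2 ∂μ = 1) (hZj2 : ∫ ω, (Zj ω) ^ 2 ∂μ = 1)
    (hZiZj : ∫ ω, Zi ω * Zj ω ∂μ = ρ)
    (hIsserlis : ∫ ω, (Zi ω) ^ 2 * (Zj ω) ^ 2 ∂μ = 1 + 2 * ρ ^ 2)
    (hZi4 : ∫ ω, (Zi ω) ^ 4 ∂μ = 3) (hZj4 : ∫ ω, (Zj ω) ^ 4 ∂μ = 3)
    -- integrability assumptions:
    (hτ2 : MemLp (fun ω => 1 / τ ω) 2 μ)
    (hZ4 : MemLp Zi 4 μ) (hZ4' : MemLp Zj 4 μ)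
    (Xi Xj : Ω → ℝ)
    (hXi : ∀ ω, Xi ω = Zi ω / Real.sqrt (τ ω))
    (hXj : ∀ ω, Xj ω = Zj ω / Real.sqrt (τ ω))
    (hint1 : Integrable (fun ω => (Xi ω) ^ 2 * (Xj ω) ^ 2) μ)
    (hint2 : MemLp (fun ω => (Xi ω) ^ 2) 2 μ)
    (hint3 : MemLp (fun ω => (Xj ω) ^ 2) 2 μ)
    (lam : ℝ)
    (hlam : lam = (∫ ω, (1 / τ ω) ^ 2 ∂μ - (∫ ω, 1 / τ ω ∂μ) ^ 2) /
      ((∫ ω, (1 / τ ω) ^ 2 ∂μ - (∫ ω, 1 / τ ω ∂μ) ^ 2)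
        + 2 * ∫ ω, (1 / τ ω) ^ 2 ∂μ)) :
    ((∫ ω, (Xi ω) ^ 2 * (Xj ω) ^ 2 ∂μ
        - (∫ ω, (Xi ω) ^ 2 ∂μ) * (∫ ω, (Xj ω) ^ 2 ∂μ)) /
      (Real.sqrt (∫ ω, (Xi ω) ^ 4 ∂μ - (∫ ω, (Xi ω) ^ 2 ∂μ) ^ 2) *
       Real.sqrt (∫ ω, (Xj ω) ^ 4 ∂μ - (∫ ω, (Xj ω) ^ 2 ∂μ) ^ 2))
      = lam + (1 - lam) * ρ ^ 2) ∧
    0 ≤ lam ∧ lam ≤ 1 ∧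
    (lam = 0 ↔ (fun ω => 1 / τ ω) =ᵐ[μ] fun _ => ∫ ω, 1 / τ ω ∂μ) :=
  stmt_16_general μ τ Zi Zj hτ hZi hZj ρ hτpos hindep hZi2 hZj2 hIsserlis hZi4 hZj4 hτ2 Xi Xj hXi
    hXj lam hlam
end
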